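/- arXiv:2107.12070 — 2 statements merged into one kernel-verified Lean document; each statement's English description precedes it below -/
import Mathlib

section
/- Let Y ∈ ℝ^{n×K} be a matrix whose columns y^{(0)}, …, y^{(K−1)} each satisfy ‖y^{(l)}‖₂² = 1, and let o be a fixed row index. Then for all row indices i, j different from o, the squared Euclidean distance between the i-th and j-th rows of Y satisfies Σ_{l=0}^{K−1} (Y_{i,l} − Y_{j,l})² ≤ 2 Σ_{l=0}^{K−1} (1 − Y_{o,l}²). Hence if the outlier's embedding coordinates |Y_{o,l}| all tend to 1, the pairwise distances between the spectral embeddings of all non-outlying points tend to 0. (Row-embedding form of Corollary 2 relevant to spectral clustering with K eigenvectors.) -/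
/-- **Row-embedding form of Corollary 2.** If the columns of the spectral
embedding matrix `Y ∈ ℝ^{n×K}` each have unit squared Euclidean norm and `o` is
the row index of an outlier, then for all row indices `i, j ≠ o` the squared
Euclidean distance between the `i`-th and `j`-th rows satisfies
`∑ₗ (Y i l − Y j l)² ≤ 2 ∑ₗ (1 − (Y o l)²)`. -/
theorem typeI_outlier_collapses_row_embeddings
    {n K : ℕ} (Y : Matrix (Fin n) (Fin K) ℝ)
    (hY : ∀ l : Fin K, ∑ i, (Y i l) ^ 2 = 1) (o : Fin n) :
    ∀ i j : Fin n, i ≠ o → j ≠ o →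
      ∑ l, (Y i l - Y j l) ^ 2 ≤ 2 * ∑ l, (1 - (Y o l) ^ 2) := by
  intro i j hi hj
  have hsq : ∀ l : Fin K, (Y o l) ^ 2 ≤ 1 := by
    intro l
    calc (Y o l) ^ 2 ≤ ∑ i, (Y i l) ^ 2 :=
          Finset.single_le_sum (fun k _ => sq_nonneg (Y k l)) (Finset.mem_univ o)
      _ = 1 := hY l
  by_cases hij : i = j
  · subst hij
    simp only [sub_self]
    have : ∑ l : Fin K, (0 : ℝ) ^ 2 = 0 := by simp
    rw [this]
    exact mul_nonneg (by norm_num) (Finset.sum_nonneg fun l _ => by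
      have := hsq l; linarith)
  · have key : ∀ l : Fin K, (Y i l - Y j l) ^ 2 ≤ 2 * (1 - (Y o l) ^ 2) := by
      intro l
      have hsub : ({i, j, o} : Finset (Fin n)) ⊆ Finset.univ := Finset.subset_univ _
      have hsum : ∑ k ∈ ({i, j, o} : Finset (Fin n)), (Y k l) ^ 2 ≤ 1 := by
        rw [← hY l]
        exact Finset.sum_le_sum_of_subset_of_nonneg hsub
          (fun k _ _ => sq_nonneg (Y k l))
      have hval : ∑ k ∈ ({i, j, o} : Finset (Fin n)), (Y k l) ^ 2
          = (Y i l) ^ 2 + (Y j l) ^ 2 + (Y o l) ^ 2 := by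
        rw [Finset.sum_insert (by simp [hij, hi]), Finset.sum_insert (by simp [hj]),
          Finset.sum_singleton]
        ring
      rw [hval] at hsum
      nlinarith [sq_nonneg (Y i l + Y j l)]
    calc ∑ l, (Y i l - Y j l) ^ 2 ≤ ∑ l, 2 * (1 - (Y o l) ^ 2) :=
          Finset.sum_le_sum fun l _ => key l
      _ = 2 * ∑ l, (1 - (Y o l) ^ 2) := by rw [Finset.mul_sum]
end

section
/- Let X ∈ ℝ^{m×n}, let Ω = diag(ω₁, …, ω_n) with ω_i > 0 for all i, let σ > 0, and suppose the Fiedler vector y ∈ ℝ^n lies in the row space of the weighted data matrix, i.e., y = Xᵀ β₀ for some β₀ ∈ ℝ^m. For γ > 0 define β̂(γ) = (X Ω Xᵀ + γσ² I)^{−1} X Ω y. Then as γ decreases to 0, β̂(γ) converges to a vector β∞ satisfying X Ω Xᵀ β∞ = X Ω y and Xᵀ β∞ = y; consequently, if W, D ∈ ℝ^{n×n} satisfy W y = λ D y, then β∞ satisfies (X W Xᵀ) β∞ = λ (X D Xᵀ) β∞, i.e., the transformation vector estimated with RRLPI is an eigenvector of the projected generalized eigenproblem as γ decreases to zero. (Theorem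 6.) -/
open Matrix Filter

namespace RRLPIAux

variable {m n : ℕ}

lemma dp_self_nonneg {k : ℕ} (v : Fin k → ℝ) : 0 ≤ v ⬝ᵥ v :=
  Finset.sum_nonneg fun i _ => mul_self_nonneg (v i)

lemma quad_form (X : Matrix (Fin m) (Fin n) ℝ) (ω : Fin n → ℝ) (v : Fin m → ℝ) :
    v ⬝ᵥ (X * Matrix.diagonal ω * Xᵀ) *ᵥ v = ∑ i, ω i * (Xᵀ *ᵥ v) i ^ 2 := by
  rw [← Matrix.mulVec_mulVec, ← Matrix.mulVec_mulVec, Matrix.dotProduct_mulVec,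
    ← Matrix.mulVec_transpose]
  simp only [dotProduct, Matrix.mulVec_diagonal]
  exact Finset.sum_congr rfl fun i _ => by ring

end RRLPIAux

/-- **Theorem 6.** With strictly positive robust weights `Ω = diag(ω)`, scale
`σ > 0`, and a Fiedler vector `y` lying in the row space of the weighted data
matrix, the RRLPI estimates `β̂(γ) = (X Ω Xᵀ + γσ² I)⁻¹ X Ω y` converge, as the
penalty `γ` decreases to `0`, to a vector `βinf` satisfying the unregularized
weighted normal equations and `Xᵀ βinf = y`; consequently, whenever
`W y = λ D y`, the limit `βinf` is an eigenvector of the projected generalized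
eigenproblem: `(X W Xᵀ) βinf = λ (X D Xᵀ) βinf`. -/
theorem rrlpi_limit_solves_projected_eigenproblem
    {m n : ℕ} (X : Matrix (Fin m) (Fin n) ℝ)
    (ω : Fin n → ℝ) (hω : ∀ i, 0 < ω i)
    (σ : ℝ) (hσ : 0 < σ)
    (y : Fin n → ℝ) (β₀ : Fin m → ℝ) (hy : y = Xᵀ.mulVec β₀) :
    ∃ βinf : Fin m → ℝ,
      Filter.Tendsto
        (fun γ : ℝ =>
          (X * Matrix.diagonal ω * Xᵀ +
            (γ * σ ^ 2) • (1 : Matrix (Fin m) (Fin m) ℝ))⁻¹.mulVec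
              ((X * Matrix.diagonal ω).mulVec y))
        (nhdsWithin 0 (Set.Ioi 0)) (nhds βinf) ∧
      (X * Matrix.diagonal ω * Xᵀ).mulVec βinf =
        (X * Matrix.diagonal ω).mulVec y ∧
      Xᵀ.mulVec βinf = y ∧
      (∀ (W D : Matrix (Fin n) (Fin n) ℝ) (lam : ℝ),
        W.mulVec y = lam • D.mulVec y →
        (X * W * Xᵀ).mulVec βinf = lam • (X * D * Xᵀ).mulVec βinf) := by
  set A := X * Matrix.diagonal ω * Xᵀ with hAdef
  -- basic facts
  have hquad : ∀ v : Fin m → ℝ, v ⬝ᵥ A *ᵥ v = ∑ i, ω i * (Xᵀ *ᵥ v) i ^ 2 :=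
    RRLPIAux.quad_form X ω
  have hPSD : ∀ v : Fin m → ℝ, 0 ≤ v ⬝ᵥ A *ᵥ v := by
    intro v
    rw [hquad]
    exact Finset.sum_nonneg fun i _ => mul_nonneg (hω i).le (sq_nonneg _)
  have hker : ∀ v : Fin m → ℝ, A *ᵥ v = 0 → Xᵀ *ᵥ v = 0 := by
    intro v hv
    have h0 : ∑ i, ω i * (Xᵀ *ᵥ v) i ^ 2 = 0 := by
      rw [← hquad, hv, dotProduct_zero]
    have := (Finset.sum_eq_zero_iff_of_nonneg
      (fun i _ => mul_nonneg (hω i).le (sq_nonneg _))).mp h0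
    funext i
    have hi := this i (Finset.mem_univ i)
    have := pow_eq_zero_iff (n := 2) (by norm_num) |>.mp
      ((mul_eq_zero.mp hi).resolve_left (hω i).ne')
    simpa using this
  have hAT : Aᵀ = A := by
    rw [hAdef]
    simp [Matrix.transpose_mul, Matrix.mul_assoc]
  -- kernel of A² equals kernel of A
  have hker2 : ∀ v : Fin m → ℝ, A *ᵥ (A *ᵥ v) = 0 → A *ᵥ v = 0 := by
    intro v hv
    have h0 : (A *ᵥ v) ⬝ᵥ (A *ᵥ v) = 0 := by
      have : v ⬝ᵥ (A *ᵥ (A *ᵥ v)) = 0 := by rw [hv, dotProduct_zero]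
      rwa [Matrix.dotProduct_mulVec, ← Matrix.mulVec_transpose, hAT] at this
    exact dotProduct_self_eq_zero.mp h0
  -- range of A² equals range of A
  set L := A.mulVecLin with hLdef
  have hkerEq : LinearMap.ker (L ∘ₗ L) = LinearMap.ker L := by
    ext v
    simp only [LinearMap.mem_ker, LinearMap.comp_apply, hLdef, Matrix.mulVecLin_apply]
    exact ⟨hker2 v, fun h => by rw [h, Matrix.mulVec_zero]⟩
  have hrangeEq : LinearMap.range (L ∘ₗ L) = LinearMap.range L := by
    apply Submodule.eq_of_le_of_finrank_le (LinearMap.range_comp_le_range L L)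
    have h1 := LinearMap.finrank_range_add_finrank_ker (L ∘ₗ L)
    have h2 := LinearMap.finrank_range_add_finrank_ker L
    rw [hkerEq] at h1
    omega
  -- obtain w with A (A w) = A β₀
  have hmem : A *ᵥ β₀ ∈ LinearMap.range (L ∘ₗ L) := by
    rw [hrangeEq]
    exact ⟨β₀, rfl⟩
  obtain ⟨w, hw⟩ := hmem
  simp only [LinearMap.comp_apply, hLdef, Matrix.mulVecLin_apply] at hw
  set u := A *ᵥ w with hudef
  have hAu : A *ᵥ u = A *ᵥ β₀ := hw
  have hXu : Xᵀ *ᵥ u = y := by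
    have h0 : A *ᵥ (β₀ - u) = 0 := by rw [Matrix.mulVec_sub, hAu, sub_self]
    have := hker _ h0
    rw [Matrix.mulVec_sub, sub_eq_zero] at this
    rw [← this, hy]
  have hXΩy : (X * Matrix.diagonal ω) *ᵥ y = A *ᵥ β₀ := by
    rw [hy, Matrix.mulVec_mulVec]
  -- invertibility of A + ε I for ε > 0
  have hMkey : ∀ ε : ℝ, 0 < ε → ∀ v : Fin m → ℝ,
      (A + ε • (1 : Matrix (Fin m) (Fin m) ℝ)) *ᵥ v = 0 → v = 0 := by
    intro ε hε v hv
    have hdot : v ⬝ᵥ ((A + ε • (1 : Matrix (Fin m) (Fin m) ℝ)) *ᵥ v)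
        = v ⬝ᵥ A *ᵥ v + ε * (v ⬝ᵥ v) := by
      rw [Matrix.add_mulVec, dotProduct_add, Matrix.smul_mulVec,
        Matrix.one_mulVec, dotProduct_smul, smul_eq_mul]
    rw [hv, dotProduct_zero] at hdot
    have hvv : v ⬝ᵥ v ≤ 0 := by nlinarith [hPSD v]
    have hvv' : v ⬝ᵥ v = 0 := le_antisymm hvv (RRLPIAux.dp_self_nonneg v)
    exact dotProduct_self_eq_zero.mp hvv'
  have hMunit : ∀ ε : ℝ, 0 < ε →
      IsUnit ((A + ε • (1 : Matrix (Fin m) (Fin m) ℝ)).det) := by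
    intro ε hε
    rw [← Matrix.isUnit_iff_isUnit_det]
    apply Matrix.mulVec_injective_iff_isUnit.mp
    intro a b hab
    have h0 : (A + ε • (1 : Matrix (Fin m) (Fin m) ℝ)) *ᵥ (a - b) = 0 := by
      rw [Matrix.mulVec_sub, hab, sub_self]
    exact sub_eq_zero.mp (hMkey ε hε _ h0)
  -- the explicit formula for β̂(γ)
  have hformula : ∀ γ : ℝ, 0 < γ →
      (A + (γ * σ ^ 2) • (1 : Matrix (Fin m) (Fin m) ℝ))⁻¹ *ᵥ
          ((X * Matrix.diagonal ω) *ᵥ y)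
        = u - (γ * σ ^ 2) • w + ((γ * σ ^ 2) ^ 2) •
            ((A + (γ * σ ^ 2) • (1 : Matrix (Fin m) (Fin m) ℝ))⁻¹ *ᵥ w) := by
    intro γ hγ
    set ε := γ * σ ^ 2 with hε
    have hεpos : 0 < ε := by positivity
    set M := A + ε • (1 : Matrix (Fin m) (Fin m) ℝ) with hM
    have hdet := hMunit ε hεpos
    have hMinvM : M⁻¹ * M = 1 := Matrix.nonsing_inv_mul M hdet
    have hMMinv : M * M⁻¹ = 1 := Matrix.mul_nonsing_inv M hdet
    have hMz : M *ᵥ (M⁻¹ *ᵥ w) = w := by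
      rw [Matrix.mulVec_mulVec, hMMinv, Matrix.one_mulVec]
    have key : M *ᵥ (u - ε • w + (ε ^ 2) • (M⁻¹ *ᵥ w))
        = (X * Matrix.diagonal ω) *ᵥ y := by
      rw [Matrix.mulVec_add, Matrix.mulVec_sub, Matrix.mulVec_smul, Matrix.mulVec_smul, hMz]
      have h1 : M *ᵥ u = A *ᵥ u + ε • u := by
        rw [hM, Matrix.add_mulVec, Matrix.smul_mulVec, Matrix.one_mulVec]
      have h2 : M *ᵥ w = A *ᵥ w + ε • w := by
        rw [hM, Matrix.add_mulVec, Matrix.smul_mulVec, Matrix.one_mulVec]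
      rw [h1, h2, hXΩy, ← hAu, ← hudef]
      module
    calc M⁻¹ *ᵥ ((X * Matrix.diagonal ω) *ᵥ y)
        = M⁻¹ *ᵥ (M *ᵥ (u - ε • w + (ε ^ 2) • (M⁻¹ *ᵥ w))) := by rw [key]
      _ = u - ε • w + (ε ^ 2) • (M⁻¹ *ᵥ w) := by
          rw [Matrix.mulVec_mulVec, hMinvM, Matrix.one_mulVec]
  -- uniform bound on the remainder direction
  set C := Real.sqrt (w ⬝ᵥ w) with hC
  have hbound : ∀ ε : ℝ, 0 < ε → ∀ i : Fin m,
      |ε * ((A + ε • (1 : Matrix (Fin m) (Fin m) ℝ))⁻¹ *ᵥ w) i| ≤ C := by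
    intro ε hε i
    set M := A + ε • (1 : Matrix (Fin m) (Fin m) ℝ) with hM
    set z := M⁻¹ *ᵥ w with hz
    have hdet := hMunit ε hε
    have hMz : M *ᵥ z = w := by
      rw [hz, Matrix.mulVec_mulVec, Matrix.mul_nonsing_inv M hdet, Matrix.one_mulVec]
    have hzw : ε * (z ⬝ᵥ z) ≤ z ⬝ᵥ w := by
      have : z ⬝ᵥ (M *ᵥ z) = z ⬝ᵥ A *ᵥ z + ε * (z ⬝ᵥ z) := by
        rw [hM, Matrix.add_mulVec, dotProduct_add, Matrix.smul_mulVec,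
          Matrix.one_mulVec, dotProduct_smul, smul_eq_mul]
      rw [hMz] at this
      nlinarith [hPSD z]
    have hCS : (z ⬝ᵥ w) ^ 2 ≤ (z ⬝ᵥ z) * (w ⬝ᵥ w) := by
      have := Finset.sum_mul_sq_le_sq_mul_sq Finset.univ z w
      simpa [dotProduct, sq] using this
    have hzz : 0 ≤ z ⬝ᵥ z := RRLPIAux.dp_self_nonneg z
    have hww : 0 ≤ w ⬝ᵥ w := RRLPIAux.dp_self_nonneg w
    have hkey : ε ^ 2 * (z ⬝ᵥ z) ≤ w ⬝ᵥ w := by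
      rcases eq_or_lt_of_le hzz with h0 | h0
      · rw [← h0]; simpa using hww
      · have hzw0 : 0 < z ⬝ᵥ w := lt_of_lt_of_le (mul_pos hε h0) hzw
        have hsq2 : (ε * (z ⬝ᵥ z)) ^ 2 ≤ (z ⬝ᵥ w) ^ 2 := by
          apply sq_le_sq' <;> nlinarith
        nlinarith [hsq2, hCS, h0]
    have hzi : z i ^ 2 ≤ z ⬝ᵥ z := by
      have : z ⬝ᵥ z = ∑ j, z j ^ 2 := by
        simp [dotProduct, sq]
      rw [this]
      exact Finset.single_le_sum (fun j _ => sq_nonneg (z j)) (Finset.mem_univ i)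
    have hsq : (ε * z i) ^ 2 ≤ w ⬝ᵥ w := by nlinarith
    calc |ε * z i| = Real.sqrt ((ε * z i) ^ 2) := (Real.sqrt_sq_eq_abs _).symm
      _ ≤ Real.sqrt (w ⬝ᵥ w) := Real.sqrt_le_sqrt hsq
  -- the limit
  refine ⟨u, ?_, hAu.trans hXΩy.symm, hXu, ?_⟩
  · rw [tendsto_pi_nhds]
    intro i
    have heq : ∀ᶠ γ : ℝ in nhdsWithin 0 (Set.Ioi 0),
        ((A + (γ * σ ^ 2) • (1 : Matrix (Fin m) (Fin m) ℝ))⁻¹ *ᵥ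
          ((X * Matrix.diagonal ω) *ᵥ y)) i
        = u i - (γ * σ ^ 2) * w i + ((γ * σ ^ 2) ^ 2) *
            ((A + (γ * σ ^ 2) • (1 : Matrix (Fin m) (Fin m) ℝ))⁻¹ *ᵥ w) i := by
      filter_upwards [self_mem_nhdsWithin] with γ hγ
      rw [hformula γ hγ]
      simp [smul_eq_mul]
    apply Filter.Tendsto.congr' (Filter.EventuallyEq.symm heq)
    have hc : Filter.Tendsto (fun γ : ℝ => γ * σ ^ 2) (nhdsWithin 0 (Set.Ioi 0)) (nhds 0) := by
      have h0 : Filter.Tendsto (fun γ : ℝ => γ * σ ^ 2) (nhds 0) (nhds (0 * σ ^ 2)) :=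
        (continuous_id.mul continuous_const).tendsto 0
      rw [zero_mul] at h0
      exact h0.mono_left nhdsWithin_le_nhds
    have h1 : Filter.Tendsto (fun γ : ℝ => u i - (γ * σ ^ 2) * w i)
        (nhdsWithin 0 (Set.Ioi 0)) (nhds (u i)) := by
      have := tendsto_const_nhds (x := u i) (f := nhdsWithin (0:ℝ) (Set.Ioi 0)) |>.sub
        (hc.mul_const (w i))
      simpa using this
    have h2 : Filter.Tendsto (fun γ : ℝ => ((γ * σ ^ 2) ^ 2) *
        ((A + (γ * σ ^ 2) • (1 : Matrix (Fin m) (Fin m) ℝ))⁻¹ *ᵥ w) i)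
        (nhdsWithin 0 (Set.Ioi 0)) (nhds 0) := by
      rw [tendsto_zero_iff_abs_tendsto_zero]
      apply squeeze_zero' (g := fun γ : ℝ => (γ * σ ^ 2) * C)
      · filter_upwards with γ using abs_nonneg _
      · filter_upwards [self_mem_nhdsWithin] with γ hγ
        have hεpos : 0 < γ * σ ^ 2 := by
          have : (0:ℝ) < γ := hγ
          positivity
        have := hbound (γ * σ ^ 2) hεpos i
        calc |((γ * σ ^ 2) ^ 2) *
            ((A + (γ * σ ^ 2) • (1 : Matrix (Fin m) (Fin m) ℝ))⁻¹ *ᵥ w) i|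
            = (γ * σ ^ 2) * |(γ * σ ^ 2) *
              ((A + (γ * σ ^ 2) • (1 : Matrix (Fin m) (Fin m) ℝ))⁻¹ *ᵥ w) i| := by
              rw [sq, mul_assoc, abs_mul, abs_of_pos hεpos]
          _ ≤ (γ * σ ^ 2) * C := by
              exact mul_le_mul_of_nonneg_left this hεpos.le
      · simpa using hc.mul_const C
    simpa using h1.add h2
  · intro W D lam h
    have e1 : (X * W * Xᵀ) *ᵥ u = X *ᵥ (W *ᵥ y) := by
      rw [← Matrix.mulVec_mulVec, ← Matrix.mulVec_mulVec, hXu]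
    have e2 : (X * D * Xᵀ) *ᵥ u = X *ᵥ (D *ᵥ y) := by
      rw [← Matrix.mulVec_mulVec, ← Matrix.mulVec_mulVec, hXu]
    rw [e1, e2, h, Matrix.mulVec_smul]
end
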